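/- Let p be an odd prime with Pisano period l_p = p−1 and β(p) = 1, and let C = ⟨f(x)⟩ be the cyclic code of parameters [p−1, 2, p−2] over F_p generated by the Fibonacci polynomial f(x) (coordinates indexed 0, 1, …, p−2). Then C has exactly p−2 minimal codewords, and each coordinate i with 1 ≤ i ≤ p−2 belongs to the support of exactly p−3 of the minimal codewords of C. -/

import Mathlib

open Polynomial

/-- The Fibonacci sequence over `ZMod p`: `F 0 = 0`, `F 1 = 1`, `F (n+2) = F (n+1) + F n`. -/
def fibMod (p : ℕ) : ℕ → ZMod p
  | 0 => 0
  | 1 => 1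
  | n + 2 => fibMod p (n + 1) + fibMod p n

/-- The Pisano period of `p`: the least `t > 0` with `F t = F 0 = 0` and `F (t+1) = F 1 = 1`. -/
noncomputable def pisano (p : ℕ) : ℕ :=
  sInf {t : ℕ | 0 < t ∧ fibMod p t = 0 ∧ fibMod p (t + 1) = 1}

/-- `β(p)`: the number of indices `0 ≤ i < l_p` with `F i = 0` in `ZMod p`. -/
noncomputable def betaP (p : ℕ) : ℕ :=
  ((Finset.range (pisano p)).filter fun i => fibMod p i = 0).card

/-- The Fibonacci polynomial `f(x) = ∑_{i=0}^{l_p - 1} F_i x^i` over `ZMod p`. -/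
noncomputable def fibPoly (p : ℕ) : (ZMod p)[X] :=
  ∑ i ∈ Finset.range (pisano p), C (fibMod p i) * X ^ i

/-- Cyclic shift of a vector of length `l`: the shift `v ↦ (v_{l-1}, v_0, …, v_{l-2})`,
which corresponds to multiplication by `x` modulo `x^l - 1` on coefficient vectors. -/
def cyclicShift (p l : ℕ) (v : Fin l → ZMod p) : Fin l → ZMod p :=
  fun i => v ⟨((i : ℕ) + (l - 1)) % l, Nat.mod_lt _ i.pos⟩

/-- The coefficient vector of length `l` of a polynomial. -/
def polyVec (p l : ℕ) (g : (ZMod p)[X]) : Fin l → ZMod p := fun i => g.coeff i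

/-- The cyclic code of length `l` generated by `g`: the ideal generated by the image of `g`
in `F_p[x]/(x^l - 1)`, identified with the subspace of `F_p^l` of coefficient vectors via
`a_0 + a_1 x + ⋯ + a_{l-1} x^{l-1} ↦ (a_0, …, a_{l-1})`; equivalently (since multiplication
by `x` is the cyclic shift), the `F_p`-span of all cyclic shifts of the coefficient vector
of `g`. -/
noncomputable def cyclicCode (p l : ℕ) (g : (ZMod p)[X]) :
    Submodule (ZMod p) (Fin l → ZMod p) :=
  Submodule.span (ZMod p) {w | ∃ k : ℕ, w = (cyclicShift p l)^[k] (polyVec p l g)}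

/-- The cyclic code of length `l` generated by the Fibonacci polynomial `f(x)`. -/
noncomputable def fibCode (p l : ℕ) : Submodule (ZMod p) (Fin l → ZMod p) :=
  cyclicCode p l (fibPoly p)

/-- A minimal codeword of a code `Cc ⊆ F_p^l`: a nonzero codeword `c` with first coordinate
`c 0 = 1` such that every codeword of `Cc` whose support is contained in `supp(c)` is a
scalar multiple of `c`. -/
def IsMinimalCodeword (p l : ℕ) (Cc : Submodule (ZMod p) (Fin l → ZMod p))
    (c : Fin l → ZMod p) : Prop :=
  c ∈ Cc ∧ c ≠ 0 ∧ (∀ h : 0 < l, c ⟨0, h⟩ = 1) ∧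
    ∀ v ∈ Cc, (∀ i, v i ≠ 0 → c i ≠ 0) → ∃ k : ZMod p, v = k • c

/-!
Every codeword of `C` is a window `(a F_i + b F_{i+1})_{0 ≤ i < l}`, `l = l_p`, of an `l`-periodic
Fibonacci-like sequence `G`. If `G` vanishes at `i < j`, the addition formula
`G (i + s + 1) = F_s G_i + F_{s+1} G_{i+1}` gives `F_{j-i} G_{i+1} = 0`, and `β(p) = 1` says
exactly that `F_k ≠ 0` for `0 < k < l`; so `G_i = G_{i+1} = 0` and `G = 0`. Hence a codeword is
determined by any two of its coordinates. A minimal codeword must have a zero (otherwise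
`(F_i)_i` would be a multiple of it), so the minimal codewords are exactly the `l - 1` codewords
with first coordinate `1` vanishing at one coordinate `j ∈ [1, l)`, and coordinate `i` lies in
the support of all of them but the one vanishing at `i`.
-/

open Function

def IsFibonacciLike {R : Type*} [Add R] (G : ℕ → R) : Prop :=
  ∀ n, G (n + 2) = G (n + 1) + G n

section Sequences

variable {p : ℕ}

theorem isFibonacciLike_fibMod (p : ℕ) : IsFibonacciLike (fibMod p) := fun _ => rfl

theorem IsFibonacciLike.add_succ {G : ℕ → ZMod p} (hG : IsFibonacciLike G) (m : ℕ) :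
    ∀ s, G (m + s + 1) = fibMod p s * G m + fibMod p (s + 1) * G (m + 1)
  | 0 => by simp [fibMod]
  | 1 => by rw [hG m]; simp [fibMod, add_comm]
  | s + 2 => by
    rw [show m + (s + 2) + 1 = m + s + 1 + 2 by omega, hG,
      show m + s + 1 + 1 = m + (s + 1) + 1 by omega, hG.add_succ m (s + 1), hG.add_succ m s]
    simp only [fibMod]
    ring

theorem fibMod_periodic {l : ℕ} (h0 : fibMod p l = 0) (h1 : fibMod p (l + 1) = 1) :
    Periodic (fibMod p) l
  | 0 => by simpa [fibMod] using h0
  | n + 1 => by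
    rw [show n + 1 + l = l + n + 1 by omega, (isFibonacciLike_fibMod p).add_succ, h0, h1]
    ring

theorem fibMod_periodic_pisano (h : 0 < pisano p) : Periodic (fibMod p) (pisano p) :=
  have hmem := Nat.sInf_mem (Nat.nonempty_of_pos_sInf h)
  fibMod_periodic hmem.2.1 hmem.2.2

theorem pisano_ne_one [Fact (1 < p)] : pisano p ≠ 1 := fun h => by
  have hper := fibMod_periodic_pisano (h ▸ one_pos)
  rw [h] at hper
  exact one_ne_zero (hper 0)

theorem fibMod_ne_zero_of_betaP_eq_one (hb : betaP p = 1) {k : ℕ} (hk0 : 0 < k)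
    (hk : k < pisano p) : fibMod p k ≠ 0 := fun hFk => by
  have hzero : 0 ∈ (Finset.range (pisano p)).filter fun i => fibMod p i = 0 := by
    simpa using ⟨hk0.trans hk, rfl⟩
  have hkmem : k ∈ (Finset.range (pisano p)).filter fun i => fibMod p i = 0 := by
    simpa using ⟨hk, hFk⟩
  exact hk0.ne (Finset.card_le_one.1 hb.le 0 hzero k hkmem)

theorem IsFibonacciLike.eq_zero_of_eq_zero_of_eq_zero [Fact p.Prime] {G : ℕ → ZMod p}
    (hG : IsFibonacciLike G) {l : ℕ} (hper : Periodic G l) {i j : ℕ} (hij : i < j) (hil : i < l)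
    (hi : G i = 0) (hj : G j = 0) (hF : fibMod p (j - i) ≠ 0) : G = 0 := by
  have hsucc : G (i + 1) = 0 := by
    have := hG.add_succ i (j - i - 1)
    rw [show i + (j - i - 1) + 1 = j by omega, show j - i - 1 + 1 = j - i by omega, hi, hj,
      mul_zero, zero_add, eq_comm, mul_eq_zero] at this
    exact this.resolve_left hF
  funext n
  rw [← hper n, show n + l = i + (n + l - i - 1) + 1 by omega, hG.add_succ, hi, hsucc]
  simp

end Sequences

theorem cyclicCode_le {p l : ℕ} {g : (ZMod p)[X]} {S : Submodule (ZMod p) (Fin l → ZMod p)}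
    (hg : polyVec p l g ∈ S) (hS : ∀ x ∈ S, cyclicShift p l x ∈ S) :
    cyclicCode p l g ≤ S := by
  refine Submodule.span_le.2 ?_
  rintro _ ⟨k, rfl⟩
  induction k with
  | zero => exact hg
  | succ k ih => exact iterate_succ_apply' _ _ _ ▸ hS _ ih

theorem iterate_cyclicShift_mem_cyclicCode {p l : ℕ} (g : (ZMod p)[X]) (k : ℕ) :
    (cyclicShift p l)^[k] (polyVec p l g) ∈ cyclicCode p l g :=
  Submodule.subset_span ⟨k, rfl⟩

def fibVec (p l : ℕ) (a b : ZMod p) : Fin l → ZMod p :=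
  fun i => a * fibMod p i + b * fibMod p (i + 1)

noncomputable def codewordVanishingAt (p l j : ℕ) : Fin l → ZMod p :=
  fibVec p l (-fibMod p (j + 1) * (fibMod p j)⁻¹) 1

section FibCode

variable {p l : ℕ}

theorem fibVec_eq_smul_add_smul (a b : ZMod p) :
    fibVec p l a b = a • fibVec p l 1 0 + b • fibVec p l 0 1 := by
  ext i
  simp [fibVec]

theorem polyVec_fibPoly (hpis : pisano p = l) : polyVec p l (fibPoly p) = fibVec p l 1 0 := by
  ext i
  simp [polyVec, fibPoly, fibVec, hpis, Polynomial.coeff_X_pow]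

theorem cyclicShift_fibVec (hper : Periodic (fibMod p) l) (a b : ZMod p) :
    cyclicShift p l (fibVec p l a b) = fibVec p l (b - a) a := by
  ext i
  have hl : 0 < l := i.pos
  have hsucc : Periodic (fun n => fibMod p (n + 1)) l := hper.add_const 1
  simp only [cyclicShift, fibVec]
  rw [hper.map_mod_nat, hsucc.map_mod_nat, show (i : ℕ) + (l - 1) + 1 = i + l by omega, hper,
    ← hper (i + 1), show (i : ℕ) + 1 + l = i + (l - 1) + 2 by omega, isFibonacciLike_fibMod,
    show (i : ℕ) + (l - 1) + 1 = i + l by omega, hper]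
  ring

theorem fibCode_eq_span (hpis : pisano p = l) (hl : 0 < l) :
    fibCode p l = Submodule.span (ZMod p) {fibVec p l 1 0, fibVec p l 0 1} := by
  have hper : Periodic (fibMod p) l := hpis ▸ fibMod_periodic_pisano (hpis ▸ hl)
  apply le_antisymm
  · refine cyclicCode_le (polyVec_fibPoly hpis ▸ Submodule.subset_span (by simp)) ?_
    intro x hx
    obtain ⟨a, b, rfl⟩ := Submodule.mem_span_pair.1 hx
    rw [← fibVec_eq_smul_add_smul, cyclicShift_fibVec hper]
    exact Submodule.mem_span_pair.2 ⟨_, _, (fibVec_eq_smul_add_smul _ _).symm⟩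
  · have h0 := iterate_cyclicShift_mem_cyclicCode (l := l) (fibPoly p) 0
    have h1 := iterate_cyclicShift_mem_cyclicCode (l := l) (fibPoly p) 1
    simp only [iterate_zero, id, iterate_one, polyVec_fibPoly hpis,
      cyclicShift_fibVec hper] at h0 h1
    refine Submodule.span_le.2 (Set.insert_subset h0 (Set.singleton_subset_iff.2 ?_))
    have : fibVec p l 0 1 = fibVec p l (0 - 1) 1 + fibVec p l 1 0 := by
      ext i; simp [fibVec]
    exact this ▸ add_mem h1 h0

theorem mem_fibCode_iff (hpis : pisano p = l) (hl : 0 < l) {v : Fin l → ZMod p} :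
    v ∈ fibCode p l ↔ ∃ a b, fibVec p l a b = v := by
  simp only [fibCode_eq_span hpis hl, Submodule.mem_span_pair, ← fibVec_eq_smul_add_smul]

theorem codewordVanishingAt_mem (hpis : pisano p = l) (hl : 0 < l) (j : ℕ) :
    codewordVanishingAt p l j ∈ fibCode p l :=
  (mem_fibCode_iff hpis hl).2 ⟨_, _, rfl⟩

theorem codewordVanishingAt_zero (hl : 0 < l) (j : ℕ) :
    codewordVanishingAt p l j ⟨0, hl⟩ = 1 := by
  simp [codewordVanishingAt, fibVec, fibMod]

end FibCode

section MinimalCodewords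

variable {p l : ℕ} [Fact p.Prime]

theorem eq_zero_of_mem_fibCode (hpis : pisano p = l) (hb : betaP p = 1) {v : Fin l → ZMod p}
    (hv : v ∈ fibCode p l) {i j : Fin l} (hij : i ≠ j) (hi : v i = 0) (hj : v j = 0) :
    v = 0 := by
  have hl : 0 < l := i.pos
  obtain ⟨a, b, rfl⟩ := (mem_fibCode_iff hpis hl).1 hv
  have hper : Periodic (fibMod p) l := hpis ▸ fibMod_periodic_pisano (hpis ▸ hl)
  set G : ℕ → ZMod p := fun n => a * fibMod p n + b * fibMod p (n + 1)
  have hG : IsFibonacciLike G := fun n => by simp only [G, isFibonacciLike_fibMod p _]; ring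
  have hGper : Periodic G l := fun n => by
    simp only [G, hper n, show n + l + 1 = n + 1 + l by omega, hper (n + 1)]
  suffices G = 0 from funext fun k => congrFun this k
  rcases Fin.lt_or_lt_of_ne hij with hlt | hlt
  · exact hG.eq_zero_of_eq_zero_of_eq_zero hGper hlt i.isLt hi hj
      (fibMod_ne_zero_of_betaP_eq_one hb (by omega) (by omega))
  · exact hG.eq_zero_of_eq_zero_of_eq_zero hGper hlt j.isLt hj hi
      (fibMod_ne_zero_of_betaP_eq_one hb (by omega) (by omega))

theorem eq_of_mem_fibCode (hpis : pisano p = l) (hb : betaP p = 1) {v w : Fin l → ZMod p}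
    (hv : v ∈ fibCode p l) (hw : w ∈ fibCode p l) {i j : Fin l} (hij : i ≠ j)
    (hi : v i = w i) (hj : v j = w j) : v = w :=
  sub_eq_zero.1 <| eq_zero_of_mem_fibCode hpis hb (sub_mem hv hw) hij
    (sub_eq_zero.2 hi) (sub_eq_zero.2 hj)

theorem codewordVanishingAt_self (hpis : pisano p = l) (hb : betaP p = 1) {j : ℕ}
    (hj : j ∈ Set.Ico 1 l) : codewordVanishingAt p l j ⟨j, hj.2⟩ = 0 := by
  have hFj : fibMod p j ≠ 0 := fibMod_ne_zero_of_betaP_eq_one hb hj.1 (hpis ▸ hj.2)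
  simp only [codewordVanishingAt, fibVec]
  field_simp
  ring

theorem codewordVanishingAt_eq_zero_iff (hpis : pisano p = l) (hb : betaP p = 1) {j : ℕ}
    (hj : j ∈ Set.Ico 1 l) {i : Fin l} : codewordVanishingAt p l j i = 0 ↔ (i : ℕ) = j := by
  constructor
  · intro hi
    by_contra hne
    have hzero := eq_zero_of_mem_fibCode hpis hb (codewordVanishingAt_mem hpis i.pos j)
      (j := ⟨j, hj.2⟩) (Fin.ne_of_val_ne hne) hi (codewordVanishingAt_self hpis hb hj)
    simpa [hzero] using codewordVanishingAt_zero (p := p) i.pos j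
  · intro h
    exact (Fin.ext h : i = ⟨j, hj.2⟩) ▸ codewordVanishingAt_self hpis hb hj

theorem isMinimalCodeword_codewordVanishingAt (hpis : pisano p = l) (hb : betaP p = 1)
    {j : ℕ} (hj : j ∈ Set.Ico 1 l) :
    IsMinimalCodeword p l (fibCode p l) (codewordVanishingAt p l j) := by
  have hl : 0 < l := Nat.zero_lt_of_lt hj.2
  have hmem := codewordVanishingAt_mem hpis hl j
  refine ⟨hmem, fun h => by simpa [h] using codewordVanishingAt_zero (p := p) hl j,
    fun _ => codewordVanishingAt_zero _ j, fun v hv hsupp => ⟨v ⟨0, hl⟩, ?_⟩⟩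
  have hvj : v ⟨j, hj.2⟩ = 0 := by
    by_contra h
    exact hsupp _ h (codewordVanishingAt_self hpis hb hj)
  refine eq_of_mem_fibCode hpis hb hv (Submodule.smul_mem _ _ hmem) (i := ⟨0, hl⟩)
    (j := ⟨j, hj.2⟩) (Fin.ne_of_val_ne (Nat.ne_of_lt hj.1)) ?_ ?_
  · simp [codewordVanishingAt_zero]
  · simp [hvj, codewordVanishingAt_self hpis hb hj]

theorem exists_eq_codewordVanishingAt (hpis : pisano p = l) (hb : betaP p = 1)
    {c : Fin l → ZMod p} (hc : IsMinimalCodeword p l (fibCode p l) c) :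
    ∃ j ∈ Set.Ico 1 l, codewordVanishingAt p l j = c := by
  obtain ⟨hmem, hne, h0, hmin⟩ := hc
  have hl : 0 < l := Nat.pos_of_ne_zero fun h => hne (funext fun i => (h ▸ i).elim0)
  have hl1 : 1 < l := lt_of_le_of_ne hl (Ne.symm (hpis ▸ pisano_ne_one))
  obtain ⟨j, hj⟩ : ∃ j, c j = 0 := by
    by_contra! hz
    obtain ⟨k, hk⟩ := hmin (fibVec p l 1 0) ((mem_fibCode_iff hpis hl).2 ⟨1, 0, rfl⟩)
      fun i _ => hz i
    have hk0 : k = 0 := by simpa [fibVec, fibMod, h0 hl] using (congrFun hk ⟨0, hl⟩).symm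
    simpa [fibVec, fibMod, hk0] using congrFun hk ⟨1, hl1⟩
  have hj0 : (j : ℕ) ≠ 0 := fun h => by simp [(Fin.ext h : j = ⟨0, hl⟩), h0 hl] at hj
  have hjIco : (j : ℕ) ∈ Set.Ico 1 l := ⟨Nat.one_le_iff_ne_zero.2 hj0, j.isLt⟩
  refine ⟨j, hjIco, eq_of_mem_fibCode hpis hb (codewordVanishingAt_mem hpis hl j) hmem
    (i := ⟨0, hl⟩) (j := j) (Fin.ne_of_val_ne (Ne.symm hj0)) ?_ ?_⟩
  · rw [codewordVanishingAt_zero, h0 hl]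
  · rw [hj, codewordVanishingAt_eq_zero_iff hpis hb hjIco]

theorem setOf_isMinimalCodeword_fibCode (hpis : pisano p = l) (hb : betaP p = 1) :
    {c | IsMinimalCodeword p l (fibCode p l) c} = codewordVanishingAt p l '' Set.Ico 1 l :=
  Set.ext fun _ => ⟨exists_eq_codewordVanishingAt hpis hb,
    fun ⟨_, hj, hc⟩ => hc ▸ isMinimalCodeword_codewordVanishingAt hpis hb hj⟩

theorem injOn_codewordVanishingAt (hpis : pisano p = l) (hb : betaP p = 1) :
    Set.InjOn (codewordVanishingAt p l) (Set.Ico 1 l) := fun _ hj _ hk h =>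
  (codewordVanishingAt_eq_zero_iff hpis hb hk).1 (h ▸ codewordVanishingAt_self hpis hb hj)

theorem ncard_setOf_isMinimalCodeword_fibCode (hpis : pisano p = l) (hb : betaP p = 1) :
    {c | IsMinimalCodeword p l (fibCode p l) c}.ncard = l - 1 := by
  rw [setOf_isMinimalCodeword_fibCode hpis hb, (injOn_codewordVanishingAt hpis hb).ncard_image,
    Set.ncard_Ico_nat]

theorem ncard_setOf_isMinimalCodeword_fibCode_apply_ne_zero (hpis : pisano p = l)
    (hb : betaP p = 1) (i : Fin l) (hi : 1 ≤ (i : ℕ)) :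
    {c | IsMinimalCodeword p l (fibCode p l) c ∧ c i ≠ 0}.ncard = l - 2 := by
  have hset : {c | IsMinimalCodeword p l (fibCode p l) c ∧ c i ≠ 0}
      = codewordVanishingAt p l '' (Set.Ico 1 l \ {(i : ℕ)}) := by
    ext c
    constructor
    · rintro ⟨hc, hci⟩
      obtain ⟨j, hj, rfl⟩ := exists_eq_codewordVanishingAt hpis hb hc
      refine ⟨j, ⟨hj, fun hji => hci ?_⟩, rfl⟩
      exact (codewordVanishingAt_eq_zero_iff hpis hb hj).2 hji.symm
    · rintro ⟨j, ⟨hj, hji⟩, rfl⟩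
      exact ⟨isMinimalCodeword_codewordVanishingAt hpis hb hj,
        fun h => hji ((codewordVanishingAt_eq_zero_iff hpis hb hj).1 h).symm⟩
  rw [hset, ((injOn_codewordVanishingAt hpis hb).mono Set.sdiff_subset).ncard_image,
    Set.ncard_sdiff_singleton_of_mem (show (i : ℕ) ∈ Set.Ico 1 l from ⟨hi, i.isLt⟩),
    Set.ncard_Ico_nat]
  omega

end MinimalCodewords

theorem fibCode_minimal_codewords_beta_one_general (p : ℕ) [Fact p.Prime]
    (hl : pisano p = p - 1) (hb : betaP p = 1) :
    Set.ncard {c | IsMinimalCodeword p (p - 1) (fibCode p (p - 1)) c} = p - 2 ∧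
      ∀ i : Fin (p - 1), 1 ≤ (i : ℕ) →
        Set.ncard {c | IsMinimalCodeword p (p - 1) (fibCode p (p - 1)) c ∧ c i ≠ 0}
          = p - 3 :=
  ⟨by rw [ncard_setOf_isMinimalCodeword_fibCode hl hb]; omega,
    fun i hi => by rw [ncard_setOf_isMinimalCodeword_fibCode_apply_ne_zero hl hb i hi]; omega⟩

/-- For an odd prime `p` with `l_p = p - 1` and `β(p) = 1`, the
`[p-1, 2, p-2]` cyclic code `C = ⟨f(x)⟩` has exactly `p - 2` minimal codewords, and every
coordinate `i` with `1 ≤ i ≤ p - 2` lies in the support of exactly `p - 3` of them. -/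
theorem fibCode_minimal_codewords_beta_one (p : ℕ) [Fact p.Prime] (hodd : Odd p)
    (hl : pisano p = p - 1) (hb : betaP p = 1) :
    Set.ncard {c | IsMinimalCodeword p (p - 1) (fibCode p (p - 1)) c} = p - 2 ∧
      ∀ i : Fin (p - 1), 1 ≤ (i : ℕ) →
        Set.ncard {c | IsMinimalCodeword p (p - 1) (fibCode p (p - 1)) c ∧ c i ≠ 0}
          = p - 3 :=
  fibCode_minimal_codewords_beta_one_general p hl hb
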